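/- Let a, b, λ, q be complex numbers with |q| < 1, |b| < 1, 1 + bq^j ≠ 0 for all integers j ≥ 1, and suppose G(aq, b, λq) ≠ 0. Then the continued fraction with b₀ = 1 − b + aq, partial numerators aₙ = λqⁿ + b, and partial denominators bₙ = 1 − b + aq^{n+1} for n ≥ 1, converges to G(a, b, λ) / G(aq, b, λq). -/

import Mathlib

/-- Numerator convergents: `cfNum a b (n+1)` is `Aₙ`, with `A₋₁ = cfNum a b 0 = 1`. -/
noncomputable def cfNum (a b : ℕ → ℂ) : ℕ → ℂ
  | 0 => 1
  | 1 => b 0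
  | n + 2 => b (n + 1) * cfNum a b (n + 1) + a (n + 1) * cfNum a b n

/-- Denominator convergents: `cfDen a b (n+1)` is `Bₙ`, with `B₋₁ = cfDen a b 0 = 0`. -/
noncomputable def cfDen (a b : ℕ → ℂ) : ℕ → ℂ
  | 0 => 0
  | 1 => 1
  | n + 2 => b (n + 1) * cfDen a b (n + 1) + a (n + 1) * cfDen a b n

/-- The continued fraction `b₀ + K(aₙ/bₙ)` converges to `f`: the approximants
`Aₙ/Bₙ` tend to `f` as `n → ∞`. -/
def CFConvergesTo (a b : ℕ → ℂ) (f : ℂ) : Prop :=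
  Filter.Tendsto (fun n => cfNum a b (n + 1) / cfDen a b (n + 1)) Filter.atTop (nhds f)

/-- Ramanujan's function `G(a, b, λ) = G(a, λ; b; q)`. -/
noncomputable def G (q a b l : ℂ) : ℂ :=
  ∑' n : ℕ, q ^ (n * (n + 1) / 2) * (∏ k ∈ Finset.range n, (a + l * q ^ k)) /
    ((∏ j ∈ Finset.range n, (1 - q ^ (j + 1))) * ∏ j ∈ Finset.range n, (1 + b * q ^ (j + 1)))

open Filter Finset Topology

/-!
The tails `g m = G(a q^m, b, λ q^m)` satisfy the backward three-term recurrence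
`g m = bₘ g (m + 1) + aₘ₊₁ g (m + 2)`, which comes from summing the ratio identity
`(1 - q^{n+1}) (1 + b q^{n+1}) tₙ₊₁ = q^{n+1} (a + λ qⁿ) tₙ` of the terms `tₙ` of `G`.
Pairing it with the forward recurrence of the approximants gives, for every `n`,
`G(a, b, λ) = Aₙ gₙ₊₁ + aₙ₊₁ Aₙ₋₁ gₙ₊₂` and `G(a q, b, λ q) = Bₙ gₙ₊₁ + aₙ₊₁ Bₙ₋₁ gₙ₊₂`.
Since `gₘ → 1` and `aₙ → b`, it remains to see that `Aₙ` and `Bₙ` converge; their recurrence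
is a summable perturbation of `xₙ₊₂ = (1 - b) xₙ₊₁ + b xₙ`, whose characteristic roots `1` and
`-b` satisfy `|-b| < 1`. Then `G(a, b, λ) = (1 + b) lim Aₙ` and `G(a q, b, λ q) = (1 + b) lim Bₙ`.
-/

theorem le_mul_exp_tsum_of_le_mul_one_add {u r : ℕ → ℝ} (hu0 : 0 ≤ u 0) (hr0 : ∀ n, 0 ≤ r n)
    (hr : Summable r) (h : ∀ n, u (n + 1) ≤ u n * (1 + r n)) (n : ℕ) :
    u n ≤ u 0 * Real.exp (∑' k, r k) := by
  have hprod : ∀ n, u n ≤ u 0 * ∏ k ∈ range n, (1 + r k) := by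
    intro n
    induction n with
    | zero => simp
    | succ n ih =>
      rw [prod_range_succ, ← mul_assoc]
      exact (h n).trans (mul_le_mul_of_nonneg_right ih (by linarith [hr0 n]))
  calc u n ≤ u 0 * ∏ k ∈ range n, (1 + r k) := hprod n
    _ ≤ u 0 * Real.exp (∑ k ∈ range n, r k) :=
      mul_le_mul_of_nonneg_left (Real.prod_one_add_le_exp_sum _ hr0) hu0
    _ ≤ u 0 * Real.exp (∑' k, r k) :=
      mul_le_mul_of_nonneg_left (Real.exp_le_exp.2 (hr.sum_le_tsum _ fun k _ => hr0 k)) hu0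

theorem summable_of_le_mul_add {u e : ℕ → ℝ} {β : ℝ} (hβ : β < 1) (hu : ∀ n, 0 ≤ u n)
    (he0 : ∀ n, 0 ≤ e n) (he : Summable e) (h : ∀ n, u (n + 1) ≤ β * u n + e n) :
    Summable u := by
  refine summable_of_sum_range_le hu (c := (u 0 + ∑' k, e k) / (1 - β)) fun n => ?_
  have hsucc : ∑ k ∈ range (n + 1), u k ≤ u 0 + β * ∑ k ∈ range n, u k + ∑' k, e k :=
    calc ∑ k ∈ range (n + 1), u k = u 0 + ∑ k ∈ range n, u (k + 1) := by
          rw [sum_range_succ', add_comm]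
      _ ≤ u 0 + ∑ k ∈ range n, (β * u k + e k) := by gcongr with k; exact h k
      _ ≤ u 0 + β * ∑ k ∈ range n, u k + ∑' k, e k := by
        rw [sum_add_distrib, ← mul_sum, add_assoc]
        gcongr
        exact he.sum_le_tsum _ fun k _ => he0 k
  have hmono : ∑ k ∈ range n, u k ≤ ∑ k ∈ range (n + 1), u k :=
    sum_le_sum_of_subset_of_nonneg (range_subset_range.2 n.le_succ) fun k _ _ => hu k
  rw [le_div_iff₀ (by linarith)]
  linarith

section Recurrence

variable {𝕜 : Type*} [NormedField 𝕜]

theorem one_add_ne_zero_of_norm_lt_one {β : 𝕜} (hβ : ‖β‖ < 1) : 1 + β ≠ 0 := fun h => by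
  rw [eq_neg_of_add_eq_zero_right h, norm_neg, norm_one] at hβ
  exact lt_irrefl _ hβ

theorem one_sub_pow_ne_zero {q : 𝕜} (hq : ‖q‖ < 1) {j : ℕ} (hj : j ≠ 0) : 1 - q ^ j ≠ 0 := by
  rw [sub_eq_add_neg]
  refine one_add_ne_zero_of_norm_lt_one ?_
  rw [norm_neg, norm_pow]
  exact pow_lt_one₀ (norm_nonneg q) hq hj

/-- In the eigencoordinates `y n = x (n + 1) + β * x n` and `d n = x (n + 1) - x n` of the
unperturbed recurrence, `y (n + 1) = y n + ε n` and `d (n + 1) = -β * d n + ε n` with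
`ε n = α n * x (n + 1) + γ n * x n`, so `‖y n‖ + ‖d n‖` grows at most like the convergent
product `∏ (1 + O(‖α n‖ + ‖γ n‖))`. -/
theorem exists_bound_of_recurrence {β : 𝕜} (hβ : ‖β‖ < 1) {α γ x : ℕ → 𝕜}
    (hα : Summable (‖α ·‖)) (hγ : Summable (‖γ ·‖))
    (hx : ∀ n, x (n + 2) = (1 - β + α n) * x (n + 1) + (β + γ n) * x n) :
    ∃ C, ∀ n, ‖x n‖ ≤ C := by
  set y : ℕ → 𝕜 := fun n => x (n + 1) + β * x n
  set d : ℕ → 𝕜 := fun n => x (n + 1) - x n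
  set ε : ℕ → 𝕜 := fun n => α n * x (n + 1) + γ n * x n
  set u : ℕ → ℝ := fun n => ‖y n‖ + ‖d n‖
  have hβ1 : 0 < ‖1 + β‖ := norm_pos_iff.2 (one_add_ne_zero_of_norm_lt_one hβ)
  have hβd (n : ℕ) : ‖β‖ * ‖d n‖ ≤ ‖d n‖ := mul_le_of_le_one_left (norm_nonneg _) hβ.le
  have hxu (n : ℕ) : ‖x n‖ ≤ u n / ‖1 + β‖ ∧ ‖x (n + 1)‖ ≤ u n / ‖1 + β‖ := by
    rw [le_div_iff₀ hβ1, le_div_iff₀ hβ1, ← norm_mul, ← norm_mul]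
    constructor
    · calc ‖x n * (1 + β)‖ = ‖y n - d n‖ := by congr 1; simp only [y, d]; ring
        _ ≤ u n := norm_sub_le _ _
    · calc ‖x (n + 1) * (1 + β)‖ = ‖y n + β * d n‖ := by congr 1; simp only [y, d]; ring
        _ ≤ ‖y n‖ + ‖β‖ * ‖d n‖ := by grw [norm_add_le, norm_mul]
        _ ≤ u n := by grw [hβd n]
  set r : ℕ → ℝ := fun n => 2 * (‖α n‖ + ‖γ n‖) / ‖1 + β‖
  have hε (n : ℕ) : 2 * ‖ε n‖ ≤ u n * r n :=
    calc 2 * ‖ε n‖ ≤ 2 * (‖α n‖ * ‖x (n + 1)‖ + ‖γ n‖ * ‖x n‖) := by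
          grw [norm_add_le, norm_mul, norm_mul]
      _ ≤ 2 * (‖α n‖ * (u n / ‖1 + β‖) + ‖γ n‖ * (u n / ‖1 + β‖)) := by
          grw [(hxu n).1, (hxu n).2]
      _ = u n * r n := by ring
  have hu (n : ℕ) : u (n + 1) ≤ u n * (1 + r n) :=
    calc u (n + 1) = ‖y n + ε n‖ + ‖-β * d n + ε n‖ := by
          simp only [u, y, d, ε, hx]; ring_nf
      _ ≤ ‖y n‖ + ‖β‖ * ‖d n‖ + 2 * ‖ε n‖ := by
          have hy := norm_add_le (y n) (ε n)
          have hd := norm_add_le (-β * d n) (ε n)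
          rw [norm_mul, norm_neg] at hd
          linarith
      _ ≤ ‖y n‖ + ‖d n‖ + u n * r n := by grw [hβd n, hε n]
      _ = u n * (1 + r n) := by ring
  have hr : Summable r := ((hα.add hγ).mul_left 2).div_const _
  refine ⟨u 0 * Real.exp (∑' k, r k) / ‖1 + β‖, fun n => (hxu n).1.trans ?_⟩
  gcongr
  exact le_mul_exp_tsum_of_le_mul_one_add (by positivity) (fun n => by positivity) hr hu n

theorem exists_tendsto_of_recurrence [CompleteSpace 𝕜] {β : 𝕜} (hβ : ‖β‖ < 1) {α γ x : ℕ → 𝕜}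
    (hα : Summable (‖α ·‖)) (hγ : Summable (‖γ ·‖))
    (hx : ∀ n, x (n + 2) = (1 - β + α n) * x (n + 1) + (β + γ n) * x n) :
    ∃ P, Tendsto x atTop (𝓝 P) := by
  obtain ⟨C, hC⟩ := exists_bound_of_recurrence hβ hα hγ hx
  set d : ℕ → 𝕜 := fun n => x (n + 1) - x n
  set ε : ℕ → 𝕜 := fun n => α n * x (n + 1) + γ n * x n
  have hε : Summable (‖ε ·‖) := by
    refine ((hα.add hγ).mul_right C).of_nonneg_of_le (fun _ => norm_nonneg _) fun n => ?_
    calc ‖ε n‖ ≤ ‖α n‖ * ‖x (n + 1)‖ + ‖γ n‖ * ‖x n‖ := by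
          grw [norm_add_le, norm_mul, norm_mul]
      _ ≤ ‖α n‖ * C + ‖γ n‖ * C := by grw [hC n, hC (n + 1)]
      _ = (‖α n‖ + ‖γ n‖) * C := by ring
  have hd : Summable d := by
    refine .of_norm (summable_of_le_mul_add hβ (fun _ => norm_nonneg _) (fun _ => norm_nonneg _)
      hε fun n => ?_)
    calc ‖d (n + 1)‖ = ‖-β * d n + ε n‖ := by simp only [d, ε, hx]; ring_nf
      _ ≤ ‖β‖ * ‖d n‖ + ‖ε n‖ := by grw [norm_add_le, norm_mul, norm_neg]
  refine ⟨x 0 + ∑' n, d n, (hd.hasSum.tendsto_sum_nat.const_add (x 0)).congr fun n => ?_⟩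
  rw [sum_range_sub, add_sub_cancel]

end Recurrence

section ContinuedFraction

variable {a b x g : ℕ → ℂ}

theorem pairing_eq_of_recurrence (hx : ∀ n, x (n + 2) = b (n + 1) * x (n + 1) + a (n + 1) * x n)
    (hg : ∀ m, g m = b m * g (m + 1) + a (m + 1) * g (m + 2)) (n : ℕ) :
    x (n + 1) * g (n + 1) + a (n + 1) * x n * g (n + 2) = x 1 * g 1 + a 1 * x 0 * g 2 := by
  induction n with
  | zero => rfl
  | succ n ih => rw [← ih, hx, hg (n + 1)]; ring

theorem pairing_eq_of_tendsto {α X : ℂ}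
    (hx : ∀ n, x (n + 2) = b (n + 1) * x (n + 1) + a (n + 1) * x n)
    (hg : ∀ m, g m = b m * g (m + 1) + a (m + 1) * g (m + 2))
    (hxX : Tendsto x atTop (𝓝 X)) (hg1 : Tendsto g atTop (𝓝 1)) (ha : Tendsto a atTop (𝓝 α)) :
    x 1 * g 1 + a 1 * x 0 * g 2 = (1 + α) * X := by
  have hlim : Tendsto (fun n => x (n + 1) * g (n + 1) + a (n + 1) * x n * g (n + 2)) atTop
      (𝓝 (X * 1 + α * X * 1)) :=
    ((hxX.comp (tendsto_add_atTop_nat 1)).mul (hg1.comp (tendsto_add_atTop_nat 1))).add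
      (((ha.comp (tendsto_add_atTop_nat 1)).mul hxX).mul (hg1.comp (tendsto_add_atTop_nat 2)))
  rw [tendsto_nhds_unique
    (tendsto_const_nhds.congr fun n => (pairing_eq_of_recurrence hx hg n).symm) hlim]
  ring

theorem cfConvergesTo_of_backward_recurrence {α P Q : ℂ} (hα : 1 + α ≠ 0) (hg1 : g 1 ≠ 0)
    (hg : ∀ m, g m = b m * g (m + 1) + a (m + 1) * g (m + 2))
    (hgt : Tendsto g atTop (𝓝 1)) (ha : Tendsto a atTop (𝓝 α))
    (hP : Tendsto (cfNum a b) atTop (𝓝 P)) (hQ : Tendsto (cfDen a b) atTop (𝓝 Q)) :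
    CFConvergesTo a b (g 0 / g 1) := by
  have hgP : g 0 = (1 + α) * P := by
    rw [← pairing_eq_of_tendsto (fun _ => rfl) hg hP hgt ha, hg 0]
    simp [cfNum]
  have hgQ : g 1 = (1 + α) * Q := by
    rw [← pairing_eq_of_tendsto (fun _ => rfl) hg hQ hgt ha]
    simp [cfDen]
  have hQ0 : Q ≠ 0 := by rintro rfl; simp [hgQ] at hg1
  rw [hgP, hgQ, mul_div_mul_left _ _ hα]
  exact (hP.comp (tendsto_add_atTop_nat 1)).div (hQ.comp (tendsto_add_atTop_nat 1)) hQ0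

end ContinuedFraction

section RamanujanG

noncomputable def gTerm (q a b l : ℂ) (n : ℕ) : ℂ :=
  q ^ (n * (n + 1) / 2) * (∏ k ∈ Finset.range n, (a + l * q ^ k)) /
    ((∏ j ∈ Finset.range n, (1 - q ^ (j + 1))) * ∏ j ∈ Finset.range n, (1 + b * q ^ (j + 1)))

theorem G_eq_tsum_gTerm (q a b l : ℂ) : G q a b l = ∑' n, gTerm q a b l n := rfl

@[simp]
theorem gTerm_zero (q a b l : ℂ) : gTerm q a b l 0 = 1 := by simp [gTerm]

theorem gTerm_mul (q a b l c : ℂ) (n : ℕ) :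
    gTerm q (a * c) b (l * c) n = c ^ n * gTerm q a b l n := by
  simp only [gTerm, show ∀ k, a * c + l * c * q ^ k = c * (a + l * q ^ k) from fun k => by ring,
    prod_mul_distrib, prod_const, card_range]
  ring

variable {q b : ℂ} (hq : ‖q‖ < 1) (hb : ∀ j : ℕ, 1 ≤ j → 1 + b * q ^ j ≠ 0)
include hq hb

theorem gTerm_succ (a l : ℂ) (n : ℕ) :
    gTerm q a b l (n + 1) =
      q ^ (n + 1) * (a + l * q ^ n) / ((1 - q ^ (n + 1)) * (1 + b * q ^ (n + 1))) *
        gTerm q a b l n := by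
  have htri : (n + 1) * (n + 1 + 1) / 2 = n * (n + 1) / 2 + (n + 1) := by
    have := (Nat.even_mul_succ_self n).two_dvd
    have : (n + 1) * (n + 1 + 1) = n * (n + 1) + 2 * (n + 1) := by ring
    omega
  have hP : ∏ j ∈ range n, (1 - q ^ (j + 1)) ≠ 0 :=
    prod_ne_zero_iff.2 fun j _ => one_sub_pow_ne_zero hq j.succ_ne_zero
  have hQ : ∏ j ∈ range n, (1 + b * q ^ (j + 1)) ≠ 0 :=
    prod_ne_zero_iff.2 fun j _ => hb (j + 1) j.succ_pos
  have h1 : 1 - q ^ (n + 1) ≠ 0 := one_sub_pow_ne_zero hq n.succ_ne_zero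
  have h2 := hb (n + 1) n.succ_pos
  simp only [gTerm, prod_range_succ, htri, pow_add q (n * (n + 1) / 2)]
  rw [div_mul_div_comm, div_eq_div_iff (by simp [*]) (by simp [*])]
  ring

theorem summable_gTerm (a l : ℂ) : Summable (gTerm q a b l) := by
  have hq0 : Tendsto (fun n => q ^ (n + 1)) atTop (𝓝 0) :=
    (tendsto_pow_atTop_nhds_zero_of_norm_lt_one hq).comp (tendsto_add_atTop_nat 1)
  have hratio : Tendsto
      (fun n => q ^ (n + 1) * (a + l * q ^ n) / ((1 - q ^ (n + 1)) * (1 + b * q ^ (n + 1))))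
      atTop (𝓝 0) := by
    rw [show (0 : ℂ) = 0 * (a + l * 0) / ((1 - 0) * (1 + b * 0)) by simp]
    have hnum := ((tendsto_pow_atTop_nhds_zero_of_norm_lt_one hq).const_mul l).const_add a
    exact (hq0.mul hnum).div ((hq0.const_sub 1).mul ((hq0.const_mul b).const_add 1)) (by simp)
  refine summable_of_ratio_norm_eventually_le (r := 1 / 2) (by norm_num) ?_
  filter_upwards [(hratio.norm.eventually (gt_mem_nhds (by norm_num : ‖(0 : ℂ)‖ < 1 / 2)))]
    with n hn
  rw [gTerm_succ hq hb, norm_mul]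
  gcongr

theorem hasSum_pow_mul_gTerm (a l c : ℂ) :
    HasSum (fun n => c ^ n * gTerm q a b l n) (G q (a * c) b (l * c)) := by
  rw [G_eq_tsum_gTerm]
  exact (summable_gTerm hq hb (a * c) (l * c)).hasSum.congr_fun fun n => (gTerm_mul q a b l c n).symm

/-- Both sides are sums against `gTerm`; their difference is `∑ (fₙ - fₙ₊₁)` with
`fₙ = (1 - qⁿ) (1 + b qⁿ) tₙ`, by `gTerm_succ`, and `f₀ = 0`. -/
theorem G_eq_mul_add_mul (a l : ℂ) :
    G q a b l =
      (1 - b + a * q) * G q (a * q) b (l * q) + (l * q + b) * G q (a * q ^ 2) b (l * q ^ 2) := by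
  have h0 := (summable_gTerm hq hb a l).hasSum
  have h1 := hasSum_pow_mul_gTerm hq hb a l q
  have h2 := hasSum_pow_mul_gTerm hq hb a l (q ^ 2)
  have hg : HasSum (fun n => q ^ (n + 1) * (a + l * q ^ n) * gTerm q a b l n)
      (a * q * G q (a * q) b (l * q) + l * q * G q (a * q ^ 2) b (l * q ^ 2)) :=
    (h1.mul_left (a * q)).add (h2.mul_left (l * q)) |>.congr_fun fun n => by ring
  have hf : HasSum (fun n => (1 - q ^ n) * (1 + b * q ^ n) * gTerm q a b l n)
      (G q a b l - (1 - b) * G q (a * q) b (l * q) - b * G q (a * q ^ 2) b (l * q ^ 2)) :=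
    (h0.sub (h1.mul_left (1 - b))).sub (h2.mul_left b) |>.congr_fun fun n => by ring
  have hshift (n : ℕ) : (1 - q ^ (n + 1)) * (1 + b * q ^ (n + 1)) * gTerm q a b l (n + 1) =
      q ^ (n + 1) * (a + l * q ^ n) * gTerm q a b l n := by
    have hD := mul_ne_zero (one_sub_pow_ne_zero hq n.succ_ne_zero) (hb (n + 1) n.succ_pos)
    rw [gTerm_succ hq hb, ← mul_assoc, mul_div_cancel₀ _ hD]
  have hf' : HasSum (fun n => (1 - q ^ n) * (1 + b * q ^ n) * gTerm q a b l n)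
      (a * q * G q (a * q) b (l * q) + l * q * G q (a * q ^ 2) b (l * q ^ 2)) := by
    rw [← hasSum_nat_add_iff' 1]
    simpa using hg.congr_fun hshift
  linear_combination hf.unique hf'

theorem tendsto_G_mul_pow (a l : ℂ) :
    Tendsto (fun m : ℕ => G q (a * q ^ m) b (l * q ^ m)) atTop (𝓝 1) := by
  have hlim (n : ℕ) : Tendsto (fun m : ℕ => (q ^ m) ^ n * gTerm q a b l n) atTop
      (𝓝 (if n = 0 then 1 else 0)) := by
    rcases eq_or_ne n 0 with rfl | hn
    · simp
    · have hqn : ‖q ^ n‖ < 1 := by rw [norm_pow]; exact pow_lt_one₀ (norm_nonneg q) hq hn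
      simpa [hn, pow_right_comm q _ n] using
        (tendsto_pow_atTop_nhds_zero_of_norm_lt_one hqn).mul_const (gTerm q a b l n)
  have hbound : ∀ᶠ m : ℕ in atTop, ∀ n, ‖(q ^ m) ^ n * gTerm q a b l n‖ ≤ ‖gTerm q a b l n‖ :=
    .of_forall fun m n => by
      rw [norm_mul, norm_pow, norm_pow]
      exact mul_le_of_le_one_left (norm_nonneg _)
        (pow_le_one₀ (by positivity) (pow_le_one₀ (norm_nonneg q) hq.le))
  have := tendsto_tsum_of_dominated_convergence (summable_gTerm hq hb a l).norm hlim hbound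
  rw [tsum_ite_eq] at this
  exact this.congr fun m => (hasSum_pow_mul_gTerm hq hb a l (q ^ m)).tsum_eq

end RamanujanG

theorem stmt9 (a b l q : ℂ) (hq : ‖q‖ < 1) (hb1 : ‖b‖ < 1)
    (hb : ∀ j : ℕ, 1 ≤ j → 1 + b * q ^ j ≠ 0)
    (hG : G q (a * q) b (l * q) ≠ 0) :
    CFConvergesTo
      (fun n => l * q ^ n + b)
      (fun n => 1 - b + a * q ^ (n + 1))
      (G q a b l / G q (a * q) b (l * q)) := by
  set num : ℕ → ℂ := fun n => l * q ^ n + b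
  set den : ℕ → ℂ := fun n => 1 - b + a * q ^ (n + 1)
  set g : ℕ → ℂ := fun m => G q (a * q ^ m) b (l * q ^ m)
  have hrec (m : ℕ) : g m = den m * g (m + 1) + num (m + 1) * g (m + 2) := by
    simpa only [g, mul_assoc, ← pow_succ, ← pow_add] using
      G_eq_mul_add_mul hq hb (a * q ^ m) (l * q ^ m)
  have hsummable (c : ℂ) (k : ℕ) : Summable fun n => ‖c * q ^ (n + k)‖ := by
    simpa [norm_mul, norm_pow, pow_add, mul_assoc] using
      ((summable_geometric_of_lt_one (norm_nonneg q) hq).mul_right (‖q‖ ^ k)).mul_left ‖c‖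
  have hconv (x : ℕ → ℂ) (hx : ∀ n, x (n + 2) = den (n + 1) * x (n + 1) + num (n + 1) * x n) :
      ∃ P, Tendsto x atTop (𝓝 P) :=
    exists_tendsto_of_recurrence hb1 (hsummable a 2) (hsummable l 1) fun n => by rw [hx]; ring
  obtain ⟨P, hP⟩ := hconv (cfNum num den) fun _ => rfl
  obtain ⟨Q, hQ⟩ := hconv (cfDen num den) fun _ => rfl
  have hnum : Tendsto num atTop (𝓝 b) := by
    simpa using ((tendsto_pow_atTop_nhds_zero_of_norm_lt_one hq).const_mul l).add_const b
  simpa [g] using cfConvergesTo_of_backward_recurrence (one_add_ne_zero_of_norm_lt_one hb1)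
    (by simpa [g] using hG) hrec (tendsto_G_mul_pow hq hb a l) hnum hP hQ
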